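/- arXiv:2504.21721 — 3 statements merged into one kernel-verified Lean document; each statement's English description precedes it below -/
import Mathlib

section
/- In the sequential MaxU allocation, the allocation is exhaustive: if some eligible commodity n (α_n = 1) receives γ_n < Q_n, then the entire link rate is used, i.e., Σ_{m=1}^{N} γ_m = R. -/
/-- The sequential MaxU allocation is exhaustive: if some eligible
commodity `n < N` (with `α n = 1`) receives `γ n < Q n`, then the entire link
rate is used, i.e. `∑_{m<N} γ m = R`. -/
theorem maxu_exhaustive
    (R : ℝ) (hR : 0 ≤ R) (N : ℕ)
    (α Q γ r : ℕ → ℝ)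
    (hα : ∀ n, α n = 0 ∨ α n = 1)
    (hQ : ∀ n, 0 ≤ Q n)
    (hr : ∀ n, r n = max (R - ∑ m ∈ Finset.range n, γ m) 0)
    (hγ : ∀ n, γ n = min (α n * r n) (Q n))
    (n : ℕ) (hn : n < N) (hel : α n = 1) (hlt : γ n < Q n) :
    ∑ m ∈ Finset.range N, γ m = R := by
  set S : ℕ → ℝ := fun k => ∑ m ∈ Finset.range k, γ m with hS
  have hstep : ∀ k, S (k + 1) = S k + γ k := by
    intro k; simp [hS, Finset.sum_range_succ]
  -- γ is nonnegative
  have hγ0 : ∀ m, 0 ≤ γ m := by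
    intro m
    rw [hγ m]
    refine le_min (mul_nonneg ?_ ?_) (hQ m)
    · rcases hα m with h | h <;> simp [h]
    · rw [hr m]; exact le_max_right _ _
  -- partial sums stay ≤ R
  have hSR : ∀ k, S k ≤ R := by
    intro k
    induction k with
    | zero => simpa [hS] using hR
    | succ k ih =>
      have hrk : r k = R - S k := by
        rw [hr k]; exact max_eq_left (by linarith)
      have hγk : γ k ≤ R - S k := by
        rw [hγ k]
        calc min (α k * r k) (Q k) ≤ α k * r k := min_le_left _ _
          _ ≤ R - S k := by
            rcases hα k with h | h <;> simp [h, hrk]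
            · linarith
      linarith [hstep k]
  -- at step n, the sum reaches R
  have hSn1 : S (n + 1) = R := by
    have hrn : r n = R - S n := by
      rw [hr n]; exact max_eq_left (by linarith [hSR n])
    have hγn : γ n = r n := by
      have h1 : γ n = min (r n) (Q n) := by rw [hγ n, hel, one_mul]
      by_cases h : r n ≤ Q n
      · rw [h1, min_eq_left h]
      · exfalso
        rw [h1, min_eq_right (le_of_not_ge h)] at hlt
        exact lt_irrefl _ hlt
    rw [hstep n, hγn, hrn]; ring
  -- afterwards, the sum stays at R
  have hafter : ∀ k, n + 1 ≤ k → S k = R := by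
    intro k hk
    induction k with
    | zero => omega
    | succ k ih =>
      rcases Nat.lt_or_ge (n + 1) (k + 1) with h | h
      · have hk' : S k = R := ih (by omega)
        have hrk : r k = 0 := by
          have hsum : ∑ m ∈ Finset.range k, γ m = R := hk'
          rw [hr k, hsum]
          simp
        have hγk : γ k = 0 := by
          have h1 : γ k ≤ 0 := by
            rw [hγ k, hrk, mul_zero]
            exact min_le_left _ _
          linarith [hγ0 k]
        rw [hstep k, hk', hγk]; ring
      · have : k + 1 = n + 1 := le_antisymm h hk
        rw [this]; exact hSn1
  exact hafter N hn
end

section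
/- The first entry of the allocation under MaxU equals the classic exclusive assignment: if the optimal commodity c* has positive backpressure and positive queue, then the sequentially computed γ for c* equals min(R, Q_{c*}); consequently the MaxU total utility on the link, Σ_c γ_c · max(U_c, 0), is at least the classic utility min(R, Q_{c*}) · max(U_{c*}, 0). -/
/-- The first entry of the MaxU allocation equals the classic
exclusive assignment: if the optimal commodity (index `0`, maximizing the
backpressure `U`, with `U 0 > 0` and `Q 0 > 0`) is placed first, then
`γ 0 = min R (Q 0)`; consequently the MaxU total utility on the link is at
least the classic utility `min R (Q 0) * max (U 0) 0`. -/
theorem maxu_first_entry_classic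
    (R : ℝ) (hR : 0 ≤ R) (N : ℕ) (hN : 0 < N)
    (U Q γ r α : ℕ → ℝ)
    (hQ : ∀ n, 0 ≤ Q n)
    (hopt : ∀ n, U n ≤ U 0)
    (hU0 : 0 < U 0) (hQ0 : 0 < Q 0)
    (hαdef : ∀ n, α n = if 0 < U n ∧ 0 < Q n then 1 else 0)
    (hr : ∀ n, r n = max (R - ∑ m ∈ Finset.range n, γ m) 0)
    (hγ : ∀ n, γ n = min (α n * r n) (Q n)) :
    γ 0 = min R (Q 0) ∧
      min R (Q 0) * max (U 0) 0 ≤ ∑ n ∈ Finset.range N, γ n * max (U n) 0 := by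
  have hγ0 : γ 0 = min R (Q 0) := by
    have hα0 : α 0 = 1 := by rw [hαdef]; simp [hU0, hQ0]
    have hr0 : r 0 = R := by rw [hr]; simp [hR]
    rw [hγ, hα0, hr0, one_mul]
  refine ⟨hγ0, ?_⟩
  have hnonneg : ∀ n ∈ Finset.range N, 0 ≤ γ n * max (U n) 0 := by
    intro n _
    apply mul_nonneg _ (le_max_right _ _)
    rw [hγ]
    refine le_min (mul_nonneg ?_ ?_) (hQ n)
    · rw [hαdef]; positivity
    · rw [hr]; exact le_max_right _ _
  calc min R (Q 0) * max (U 0) 0 = γ 0 * max (U 0) 0 := by rw [hγ0]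
    _ ≤ ∑ n ∈ Finset.range N, γ n * max (U n) 0 :=
        Finset.single_le_sum hnonneg (Finset.mem_range.mpr hN)
end

section
/- In a graph where every vertex has at most Δ neighbors, the greedy MWIS solution achieves total weight at least 1/(Δ+1) times the weight of a maximum-weight independent set, assuming all weights are nonnegative. -/
open Classical in
/-- Greedy MWIS (nonnegative-weight version): process vertices of the list in
order, adding a vertex to the accumulated set `S` if it has no neighbor in
`S`. -/
noncomputable def greedyMWIS {E : Type*} (G : SimpleGraph E) :
    List E → Finset E → Finset E
  | [], S => S
  | v :: rest, S =>
      greedyMWIS G rest (if ∀ u ∈ S, ¬ G.Adj v u then insert v S else S)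

/-!
Charge every vertex `v` to a greedy vertex `u` with `ω v ≤ ω u` and `v` in the closed
neighbourhood of `u`: `v` itself if it was chosen, otherwise the neighbour that blocked it,
which was processed earlier and is therefore at least as heavy. Each greedy vertex is charged
at most `Δ + 1` times, each time by a weight at most its own.
-/

open Finset

theorem Finset.sum_le_card_mul_sum_of_maps_to {ι κ R : Type*}
    [Semiring R] [PartialOrder R] [IsOrderedRing R]
    {s : Finset ι} {t : Finset κ} [DecidableEq κ] (f : ι → κ) (hf : ∀ i ∈ s, f i ∈ t)
    {c : ℕ} (hc : ∀ j ∈ t, #{i ∈ s | f i = j} ≤ c) {w : ι → R} {w' : κ → R}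
    (hw : ∀ i ∈ s, w i ≤ w' (f i)) (hw' : ∀ j ∈ t, 0 ≤ w' j) :
    ∑ i ∈ s, w i ≤ c * ∑ j ∈ t, w' j := by
  rw [← sum_fiberwise_of_maps_to hf, mul_sum]
  refine sum_le_sum fun j hj => ?_
  calc ∑ i ∈ s with f i = j, w i
      ≤ ∑ i ∈ s with f i = j, w' j := sum_le_sum fun i hi => by
        obtain ⟨his, rfl⟩ := mem_filter.1 hi
        exact hw i his
    _ = #{i ∈ s | f i = j} * w' j := by rw [sum_const, nsmul_eq_mul]
    _ ≤ c * w' j := mul_le_mul_of_nonneg_right (Nat.mono_cast (hc j hj)) (hw' j hj)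

namespace SimpleGraph

variable {V : Type*} (G : SimpleGraph V)

theorem card_le_degree_add_one [Fintype V] [DecidableRel G.Adj] [DecidableEq V]
    {s : Finset V} {u : V} (hs : ∀ v ∈ s, v = u ∨ G.Adj u v) : #s ≤ G.degree u + 1 := by
  have hsub : s ⊆ insert u (G.neighborFinset u) := fun v hv => by
    simpa only [mem_insert, mem_neighborFinset] using hs v hv
  calc #s ≤ #(insert u (G.neighborFinset u)) := card_le_card hsub
    _ ≤ #(G.neighborFinset u) + 1 := card_insert_le _ _
    _ = G.degree u + 1 := by rw [card_neighborFinset_eq_degree]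

open Classical in
theorem subset_greedyMWIS : ∀ (L : List V) (S : Finset V), S ⊆ greedyMWIS G L S
  | [], _ => subset_rfl
  | v :: rest, S => by
      rw [greedyMWIS]
      split_ifs
      · exact (subset_insert v S).trans (subset_greedyMWIS rest _)
      · exact subset_greedyMWIS rest S

theorem exists_mem_greedyMWIS_le {R : Type*} [Preorder R] (ω : V → R) :
    ∀ (L : List V) (S : Finset V), L.Pairwise (fun a b => ω b ≤ ω a) →
      (∀ u ∈ S, ∀ v ∈ L, ω v ≤ ω u) →
      ∀ v ∈ L, ∃ u ∈ greedyMWIS G L S, ω v ≤ ω u ∧ (v = u ∨ G.Adj u v)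
  | [], _, _, _, _, hv => absurd hv List.not_mem_nil
  | a :: rest, S, hsorted, hS, v, hv => by
      classical
      obtain ⟨ha, hrest⟩ := List.pairwise_cons.1 hsorted
      rw [greedyMWIS]
      by_cases hfree : ∀ u ∈ S, ¬ G.Adj a u
      · rw [if_pos hfree]
        rcases List.mem_cons.1 hv with rfl | hv
        · exact ⟨v, subset_greedyMWIS G rest _ (mem_insert_self v S), le_rfl, .inl rfl⟩
        refine exists_mem_greedyMWIS_le ω rest _ hrest (fun u hu w hw => ?_) v hv
        rcases mem_insert.1 hu with rfl | hu
        · exact ha w hw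
        · exact hS u hu w (List.mem_cons_of_mem a hw)
      · rw [if_neg hfree]
        rcases List.mem_cons.1 hv with rfl | hv
        · push Not at hfree
          obtain ⟨u, hu, hadj⟩ := hfree
          exact ⟨u, subset_greedyMWIS G rest S hu, hS u hu v List.mem_cons_self,
            .inr hadj.symm⟩
        exact exists_mem_greedyMWIS_le ω rest S hrest
          (fun u hu w hw => hS u hu w (List.mem_cons_of_mem a hw)) v hv

end SimpleGraph

theorem greedyMWIS_approximation_general
    {E : Type*} [Fintype E]
    (G : SimpleGraph E) [DecidableRel G.Adj] (ω : E → ℝ) (Δ : ℕ)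
    (hdeg : ∀ v : E, G.degree v ≤ Δ)
    (hω : ∀ v : E, 0 ≤ ω v)
    (L : List E)
    (hsorted : L.Pairwise (fun a b => ω b ≤ ω a))
    (hall : ∀ v : E, v ∈ L) :
    ∀ I : Finset E, (∀ u ∈ I, ∀ v ∈ I, ¬ G.Adj u v) →
      ∑ v ∈ I, ω v ≤ ((Δ : ℝ) + 1) * ∑ v ∈ greedyMWIS G L ∅, ω v := by
  classical
  intro I _
  choose f hf hwf hadj using fun v =>
    G.exists_mem_greedyMWIS_le ω L ∅ hsorted (by simp) v (hall v)
  have hfiber (u : E) : #{v ∈ I | f v = u} ≤ Δ + 1 := by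
    refine (G.card_le_degree_add_one fun v hv => ?_).trans (Nat.add_le_add_right (hdeg u) 1)
    exact (mem_filter.1 hv).2 ▸ hadj v
  exact_mod_cast sum_le_card_mul_sum_of_maps_to f (fun v _ => hf v) (fun u _ => hfiber u)
    (fun v _ => hwf v) (fun u _ => hω u)

/-- In a graph of maximum degree `Δ` with nonnegative vertex
weights, the greedy MWIS solution (processing vertices in non-increasing weight
order) achieves total weight at least `1/(Δ+1)` times the weight of any
independent set, in particular of a maximum-weight independent set. -/
theorem greedyMWIS_approximation
    {E : Type*} [Fintype E] [DecidableEq E]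
    (G : SimpleGraph E) [DecidableRel G.Adj] (ω : E → ℝ) (Δ : ℕ)
    (hdeg : ∀ v : E, G.degree v ≤ Δ)
    (hω : ∀ v : E, 0 ≤ ω v)
    (L : List E)
    (hsorted : L.Pairwise (fun a b => ω b ≤ ω a))
    (hnodup : L.Nodup) (hall : ∀ v : E, v ∈ L) :
    ∀ I : Finset E, (∀ u ∈ I, ∀ v ∈ I, ¬ G.Adj u v) →
      ∑ v ∈ I, ω v ≤ ((Δ : ℝ) + 1) * ∑ v ∈ greedyMWIS G L ∅, ω v :=
  greedyMWIS_approximation_general G ω Δ hdeg hω L hsorted hall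
end
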